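/- arXiv:2512.15245 — 3 statements merged into one kernel-verified Lean document; each statement's English description precedes it below -/
import Mathlib

section
/- Let ψ ∈ L²((0,∞); H') and ξ ∈ L²((0,∞); H) (with H a separable Hilbert space and H' its dual), let φ(z,ζ) = ψ(z)ξ(ζ), and set R_x = ∫_x^∞ ξ(z)ψ(z) dz, a trace-class operator on H. Suppose I + R_x is invertible for x > x₀ and define T(x,y) = −ψ(x)(I+R_x)^{-1}ξ(y). Then T solves the Gelfand–Levitan–Marchenko equation φ(x,y) + T(x,y) + ∫_x^∞ T(x,z)φ(z,y) dz = 0 for x₀ < x < y. -/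
open MeasureTheory Set

/- Since `ψ z v • ξ z` is integrable (Hölder for the two `L²` factors), the bounded
functional `ψ x ∘ F x` commutes with the integral, so `∫_x^∞ T(x,z) φ(z,y) dz = -ψ x (F x (R x ξ(y)))`.
As `F x` is a left inverse of `1 + R x`, we have `F x ∘ R x = 1 - F x`, and the sum telescopes. -/

section IntegrableApplySMul

variable {α 𝕜 E H : Type*} [MeasurableSpace α] {μ : Measure α} [RCLike 𝕜]
  [NormedAddCommGroup E] [NormedSpace 𝕜 E] [NormedAddCommGroup H] [NormedSpace 𝕜 H]
  {ψ : α → E →L[𝕜] 𝕜} {ξ : α → H}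

theorem MeasureTheory.MemLp.integrable_apply_smul (hψ : MemLp ψ 2 μ) (hξ : MemLp ξ 2 μ) (v : E) :
    Integrable (fun z => ψ z v • ξ z) μ := by
  have hψv : MemLp (fun z => ψ z v) 2 μ :=
    (ContinuousLinearMap.apply 𝕜 𝕜 v).comp_memLp' hψ
  exact memLp_one_iff_integrable.mp (hξ.smul hψv)

theorem integral_apply_mul_apply_eq_apply_integral [NormedSpace ℝ H] [CompleteSpace H]
    (L : H →L[𝕜] 𝕜) {v : E} (hint : Integrable (fun z => ψ z v • ξ z) μ) :
    ∫ z, L (ξ z) * ψ z v ∂μ = L (∫ z, ψ z v • ξ z ∂μ) := by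
  rw [← L.integral_comp_comm hint]
  simp only [map_smul, smul_eq_mul, mul_comm]

end IntegrableApplySMul

theorem mul_eq_one_sub_of_mul_one_add_eq_one {A : Type*} [Ring A] {F R : A}
    (h : F * (1 + R) = 1) : F * R = 1 - F := by
  rw [mul_add, mul_one] at h
  exact eq_sub_of_add_eq' h

theorem stmt7_general
    (H : Type*) [NormedAddCommGroup H] [InnerProductSpace ℂ H] [CompleteSpace H]
    (ψ : ℝ → (H →L[ℂ] ℂ)) (ξ : ℝ → H) (x₀ : ℝ) (hx₀ : 0 ≤ x₀)
    (hψ : MemLp ψ 2 (volume.restrict (Ioi (0:ℝ))))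
    (hξ : MemLp ξ 2 (volume.restrict (Ioi (0:ℝ))))
    -- R_x = ∫_x^∞ ξ(z) ψ(z) dz  (a rank-accumulating operator-valued integral)
    (R : ℝ → (H →L[ℂ] H))
    (hR : ∀ x : ℝ, ∀ v : H, R x v = ∫ z in Ioi x, (ψ z v) • ξ z)
    -- F x is a two-sided inverse of I + R_x for x > x₀
    (F : ℝ → (H →L[ℂ] H))
    (hF : ∀ x : ℝ, x₀ < x → (1 + R x) * F x = 1 ∧ F x * (1 + R x) = 1)
    (T : ℝ → ℝ → ℂ)
    (hT : ∀ x y : ℝ, T x y = -(ψ x (F x (ξ y)))) :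
    ∀ x y : ℝ, x₀ < x → x < y →
      ψ x (ξ y) + T x y + (∫ z in Ioi x, T x z * ψ z (ξ y)) = 0 := by
  intro x y hx _
  have hle : volume.restrict (Ioi x) ≤ volume.restrict (Ioi (0:ℝ)) :=
    Measure.restrict_mono (Ioi_subset_Ioi (hx₀.trans hx.le)) le_rfl
  have hint := (hψ.mono_measure hle).integrable_apply_smul (hξ.mono_measure hle) (ξ y)
  have hintegral : ∫ z in Ioi x, T x z * ψ z (ξ y) = -ψ x (F x (R x (ξ y))) := by
    simp_rw [hT, neg_mul, integral_neg, ← ContinuousLinearMap.comp_apply (ψ x) (F x),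
      integral_apply_mul_apply_eq_apply_integral _ hint, hR]
  have hFR : F x (R x (ξ y)) = ξ y - F x (ξ y) := by
    simpa using congrArg (· (ξ y)) (mul_eq_one_sub_of_mul_one_add_eq_one (hF x hx).2)
  rw [hintegral, hT, hFR, map_sub]
  ring

theorem stmt7
    (H : Type*) [NormedAddCommGroup H] [InnerProductSpace ℂ H] [CompleteSpace H]
    [TopologicalSpace.SeparableSpace H]
    (ψ : ℝ → (H →L[ℂ] ℂ)) (ξ : ℝ → H) (x₀ : ℝ) (hx₀ : 0 ≤ x₀)
    (hψ : MemLp ψ 2 (volume.restrict (Ioi (0:ℝ))))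
    (hξ : MemLp ξ 2 (volume.restrict (Ioi (0:ℝ))))
    -- R_x = ∫_x^∞ ξ(z) ψ(z) dz  (a rank-accumulating operator-valued integral)
    (R : ℝ → (H →L[ℂ] H))
    (hR : ∀ x : ℝ, ∀ v : H, R x v = ∫ z in Ioi x, (ψ z v) • ξ z)
    -- F x is a two-sided inverse of I + R_x for x > x₀
    (F : ℝ → (H →L[ℂ] H))
    (hF : ∀ x : ℝ, x₀ < x → (1 + R x) * F x = 1 ∧ F x * (1 + R x) = 1)
    (T : ℝ → ℝ → ℂ)
    (hT : ∀ x y : ℝ, T x y = -(ψ x (F x (ξ y)))) :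
    ∀ x y : ℝ, x₀ < x → x < y →
      ψ x (ξ y) + T x y + (∫ z in Ioi x, T x z * ψ z (ξ y)) = 0 :=
  stmt7_general H ψ ξ x₀ hx₀ hψ hξ R hR F hF T hT
end

section
/- Let (s_j)_{j≥0} be a nonincreasing null sequence of positive reals with Σ s_j² < ∞ and let n(t) = #{j : t s_j² ≥ 1}. Then for all x > 0, log Π_{j=0}^∞ (1 + x² s_j²) = x² ∫₀^∞ n(t) / (t(t + x²)) dt. -/
/-!
With `a = s_j²` and `c = x²`, `log t - log (t + c)` is an antiderivative of `c / (t (t + c))`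
vanishing at infinity, so `log (1 + c a) = ∫_{1/a}^∞ c / (t (t + c)) dt`. The integrands are
nonnegative and their integrals `log (1 + c a_j) ≤ c a_j` are summable, so sum and integral
commute, and the sum over `j` of the indicators of `[1/a_j, ∞)` is the counting function `n`.
-/

open Set MeasureTheory Filter Real Topology

section Kernel

variable {b c : ℝ}

lemma hasDerivAt_log_sub_log_add {t : ℝ} (hc : 0 ≤ c) (ht : 0 < t) :
    HasDerivAt (fun u => log u - log (u + c)) (c / (t * (t + c))) t := by
  have htc : 0 < t + c := by linarith
  refine ((hasDerivAt_log ht.ne').sub (((hasDerivAt_id' t).add_const c).log htc.ne')).congr_deriv ?_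
  field_simp
  ring

lemma tendsto_log_sub_log_add_atTop (c : ℝ) :
    Tendsto (fun t => log t - log (t + c)) atTop (𝓝 0) := by
  simpa using (tendsto_log_comp_add_sub_log c).neg

lemma div_mul_add_nonneg (hc : 0 ≤ c) {t : ℝ} (ht : 0 < t) : 0 ≤ c / (t * (t + c)) := by
  positivity

lemma integrableOn_Ioi_div_mul_add (hb : 0 < b) (hc : 0 ≤ c) :
    IntegrableOn (fun t => c / (t * (t + c))) (Ioi b) :=
  integrableOn_Ioi_deriv_of_nonneg' (fun _ ht => hasDerivAt_log_sub_log_add hc (hb.trans_le ht))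
    (fun _ ht => div_mul_add_nonneg hc (hb.trans ht)) (tendsto_log_sub_log_add_atTop c)

lemma integral_Ioi_div_mul_add (hb : 0 < b) (hc : 0 ≤ c) :
    ∫ t in Ioi b, c / (t * (t + c)) = log (1 + c / b) := by
  rw [integral_Ioi_of_hasDerivAt_of_nonneg'
    (fun _ ht => hasDerivAt_log_sub_log_add hc (hb.trans_le ht))
    (fun _ ht => div_mul_add_nonneg hc (hb.trans ht)) (tendsto_log_sub_log_add_atTop c),
    one_add_div hb.ne', log_div (by linarith) hb.ne']
  ring

end Kernel

lemma tsum_indicator_const {ι G : Type*} [TopologicalSpace G] [AddCommGroup G]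
    [IsTopologicalAddGroup G] [T2Space G] (S : Set ι) (r : G) :
    ∑' j, S.indicator (fun _ => r) j = Nat.card S • r := by
  rw [← tsum_subtype, tsum_const]

lemma Real.log_tprod_one_add {ι : Type*} {f : ι → ℝ} (hf : Summable f)
    (hpos : ∀ i, 0 < 1 + f i) :
    log (∏' i, (1 + f i)) = ∑' i, log (1 + f i) := by
  rw [← rexp_tsum_eq_tprod hpos (summable_log_one_add_of_summable hf), log_exp]

theorem tsum_log_one_add_mul_eq_integral_card {ι : Type*} [Countable ι] {a : ι → ℝ} {c : ℝ}
    (ha : ∀ j, 0 < a j) (hsum : Summable a) (hc : 0 ≤ c) :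
    ∑' j, log (1 + c * a j)
      = c * ∫ t in Ioi (0 : ℝ), (Nat.card {j | 1 ≤ t * a j} : ℝ) / (t * (t + c)) := by
  set g : ℝ → ℝ := fun t => c / (t * (t + c))
  set f : ι → ℝ → ℝ := fun j => (Ici (a j)⁻¹).indicator g
  have hf_nonneg (j : ι) (t : ℝ) : 0 ≤ f j t :=
    indicator_nonneg (fun _ ht => div_mul_add_nonneg hc ((inv_pos.2 (ha j)).trans_le ht)) t
  have hf_int (j : ι) : Integrable (f j) (volume.restrict (Ioi 0)) := by
    have hg : IntegrableOn g (Ici (a j)⁻¹) := by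
      rw [integrableOn_Ici_iff_integrableOn_Ioi]
      exact integrableOn_Ioi_div_mul_add (inv_pos.2 (ha j)) hc
    exact (hg.integrable_indicator measurableSet_Ici).restrict
  have hf_integral (j : ι) : ∫ t in Ioi 0, f j t = log (1 + c * a j) := by
    rw [integral_indicator measurableSet_Ici, Measure.restrict_restrict measurableSet_Ici,
      inter_eq_left.2 (Ici_subset_Ioi.2 (inv_pos.2 (ha j))), integral_Ici_eq_integral_Ioi,
      integral_Ioi_div_mul_add (inv_pos.2 (ha j)) hc, div_inv_eq_mul]
  have hf_sum : Summable fun j => ∫ t in Ioi (0 : ℝ), ‖f j t‖ := by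
    simp only [norm_of_nonneg (hf_nonneg _ _), hf_integral]
    exact summable_log_one_add_of_summable (hsum.mul_left c)
  calc ∑' j, log (1 + c * a j) = ∑' j, ∫ t in Ioi (0 : ℝ), f j t :=
        tsum_congr fun j => (hf_integral j).symm
    _ = ∫ t in Ioi (0 : ℝ), ∑' j, f j t :=
        integral_tsum_of_summable_integral_norm hf_int hf_sum
    _ = ∫ t in Ioi (0 : ℝ), c * ((Nat.card {j | 1 ≤ t * a j} : ℝ) / (t * (t + c))) := by
      congr 1 with t
      rw [← mul_div_assoc, mul_comm c, mul_div_assoc, ← nsmul_eq_mul, ← tsum_indicator_const]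
      refine tsum_congr fun j => ?_
      simp only [f, g, indicator_apply, mem_Ici, mem_ofPred_eq, inv_le_iff_one_le_mul₀ (ha j)]
    _ = c * ∫ t in Ioi (0 : ℝ), (Nat.card {j | 1 ≤ t * a j} : ℝ) / (t * (t + c)) :=
      integral_const_mul _ _

theorem stmt14_general
    (s : ℕ → ℝ) (hpos : ∀ j, 0 < s j)
    (hsum : Summable fun j => s j ^ 2)
    (n : ℝ → ℝ)
    (hn : ∀ t : ℝ, n t = (Nat.card {j : ℕ | 1 ≤ t * s j ^ 2} : ℝ)) :
    ∀ x : ℝ, 0 < x →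
      Real.log (∏' j, (1 + x ^ 2 * s j ^ 2))
        = x ^ 2 * ∫ t in Ioi (0:ℝ), n t / (t * (t + x ^ 2)) := by
  intro x _
  rw [Real.log_tprod_one_add (hsum.mul_left _) fun j => by positivity,
    tsum_log_one_add_mul_eq_integral_card (fun j => pow_pos (hpos j) 2) hsum (sq_nonneg x)]
  simp only [hn]

theorem stmt14
    (s : ℕ → ℝ) (hpos : ∀ j, 0 < s j) (hmono : Antitone s)
    (hlim : Filter.Tendsto s Filter.atTop (nhds 0))
    (hsum : Summable fun j => s j ^ 2)
    (n : ℝ → ℝ)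
    (hn : ∀ t : ℝ, n t = (Nat.card {j : ℕ | 1 ≤ t * s j ^ 2} : ℝ)) :
    ∀ x : ℝ, 0 < x →
      Real.log (∏' j, (1 + x ^ 2 * s j ^ 2))
        = x ^ 2 * ∫ t in Ioi (0:ℝ), n t / (t * (t + x ^ 2)) :=
  stmt14_general s hpos hsum n hn
end

section
/- For all λ ∈ ℂ and u, v ≥ 0, the Bessel function J₀ satisfies the product formula J₀(λu)·J₀(λv) = (1/2π) ∫₀^{2π} J₀(λ√(u² + v² − 2uv cos t)) dt. -/
/-!
Both sides are power series in `λ²` with coefficients `c k = (-1/4)^k / (k!)²`.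
On the left, the Cauchy product and `c a * c b = c (a+b) * (a+b choose a)²` give the coefficient
`c n * Σ_a (n choose a)² u^(2a) v^(2(n-a))`. On the right,
`u² + v² - 2uv cos t = (v - u e^{it}) (v - u e^{-it})`, so by orthogonality of the `e^{iat}` the
`n`-th moment of this expression over a period is `2π Σ_a (n choose a)² u^(2a) v^(2(n-a))`;
integrating termwise is justified by dominated convergence.
-/

/-- The Bessel function J₀ of the first kind of order zero, as the entire
function J₀(z) = Σ_{k≥0} (−1)^k (z/2)^{2k}/(k!)², extending
J₀(x) = (1/π)∫₀^π cos(x sinθ)dθ. -/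
noncomputable def J0c (z : ℂ) : ℂ :=
  ∑' k : ℕ, (-1) ^ k * (z / 2) ^ (2 * k) / ((k.factorial : ℂ)) ^ 2

open Complex Finset intervalIntegral
open scoped Real Nat

noncomputable def besselCoeff (k : ℕ) : ℂ := (-1 / 4) ^ k / (k ! : ℂ) ^ 2

lemma J0c_eq_tsum (z : ℂ) : J0c z = ∑' k, besselCoeff k * (z ^ 2) ^ k := by
  unfold J0c besselCoeff
  congr 1 with k
  rw [pow_mul, div_pow, div_pow, div_pow]
  norm_num
  ring

lemma besselCoeff_mul_besselCoeff (a b : ℕ) :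
    besselCoeff a * besselCoeff b = besselCoeff (a + b) * ((a + b).choose a : ℂ) ^ 2 := by
  have h := Nat.add_choose_mul_factorial_mul_factorial a b
  rw [← Nat.choose_symm_add] at h
  unfold besselCoeff
  rw [← h]
  push_cast
  have : ((a + b).choose a : ℂ) ≠ 0 := by exact_mod_cast (Nat.choose_pos (by omega)).ne'
  field_simp
  ring

lemma norm_besselCoeff_mul_pow_le {s : ℂ} {B : ℝ} (hs : ‖s‖ ≤ B) (k : ℕ) :
    ‖besselCoeff k * s ^ k‖ ≤ (B / 4) ^ k / k ! := by
  have hfac : (1 : ℝ) ≤ k ! := by exact_mod_cast k.factorial_pos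
  calc ‖besselCoeff k * s ^ k‖ = (‖s‖ / 4) ^ k / (k ! : ℝ) ^ 2 := by
        simp [besselCoeff, div_pow]
        ring
    _ ≤ (B / 4) ^ k / (k ! : ℝ) ^ 2 := by gcongr
    _ ≤ (B / 4) ^ k / k ! := by
        have : 0 ≤ B := (norm_nonneg s).trans hs
        gcongr
        nlinarith

lemma summable_norm_besselCoeff_mul_pow (s : ℂ) :
    Summable fun k => ‖besselCoeff k * s ^ k‖ :=
  (Real.summable_pow_div_factorial _).of_nonneg_of_le (fun _ => norm_nonneg _)
    (norm_besselCoeff_mul_pow_le le_rfl)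

noncomputable def chooseSqPoly (n : ℕ) (s r : ℂ) : ℂ :=
  ∑ a ∈ range (n + 1), (n.choose a : ℂ) ^ 2 * s ^ a * r ^ (n - a)

lemma chooseSqPoly_mul_mul (n : ℕ) (c s r : ℂ) :
    chooseSqPoly n (c * s) (c * r) = c ^ n * chooseSqPoly n s r := by
  rw [chooseSqPoly, chooseSqPoly, mul_sum]
  refine sum_congr rfl fun a ha => ?_
  rw [← pow_mul_pow_sub c (Nat.lt_succ_iff.mp (mem_range.mp ha))]
  ring

lemma J0c_mul_J0c (x y : ℂ) :
    J0c x * J0c y = ∑' n, besselCoeff n * chooseSqPoly n (x ^ 2) (y ^ 2) := by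
  rw [J0c_eq_tsum, J0c_eq_tsum, tsum_mul_tsum_eq_tsum_sum_range_of_summable_norm
    (summable_norm_besselCoeff_mul_pow _) (summable_norm_besselCoeff_mul_pow _)]
  refine tsum_congr fun n => ?_
  rw [chooseSqPoly, mul_sum]
  refine sum_congr rfl fun a ha => ?_
  have h := besselCoeff_mul_besselCoeff a (n - a)
  rw [Nat.add_sub_cancel' (Nat.lt_succ_iff.mp (mem_range.mp ha))] at h
  linear_combination (x ^ 2) ^ a * (y ^ 2) ^ (n - a) * h

lemma integral_exp_int_mul (n : ℤ) :
    ∫ t in (0 : ℝ)..2 * π, exp (n * (t * I)) = if n = 0 then (2 * π : ℂ) else 0 := by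
  split_ifs with h
  · subst h; simp
  · have hn : (n : ℂ) * I ≠ 0 := by simp [h]
    have hperiod : exp (n * I * (2 * π : ℝ)) = 1 := by
      rw [← exp_int_mul_two_pi_mul_I n]; push_cast; ring_nf
    have hcomm (t : ℝ) : (n : ℂ) * (t * I) = n * I * t := by ring
    simp_rw [hcomm, integral_exp_mul_complex hn, hperiod]
    simp

lemma integral_exp_mul_exp_neg (a b : ℕ) :
    ∫ t in (0 : ℝ)..2 * π, exp (a * (t * I)) * exp (b * -(t * I)) =
      if a = b then (2 * π : ℂ) else 0 := by
  have h (t : ℝ) :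
      exp (a * (t * I)) * exp (b * -(t * I)) = exp (((a - b : ℤ) : ℂ) * (t * I)) := by
    rw [← exp_add]; push_cast; ring_nf
  simp_rw [h, integral_exp_int_mul, sub_eq_zero, Nat.cast_inj]

lemma integral_sum_exp_mul_sum_exp_neg (N : ℕ) (α β : ℕ → ℂ) :
    ∫ t in (0 : ℝ)..2 * π,
        (∑ a ∈ range N, α a * exp (a * (t * I))) * ∑ b ∈ range N, β b * exp (b * -(t * I)) =
      2 * π * ∑ a ∈ range N, α a * β a := by
  simp_rw [sum_mul_sum, mul_mul_mul_comm (α _), mul_sum]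
  rw [integral_finsetSum fun a _ => (by fun_prop : Continuous _).intervalIntegrable _ _]
  refine sum_congr rfl fun a ha => ?_
  rw [integral_finsetSum fun b _ => (by fun_prop : Continuous _).intervalIntegrable _ _]
  simp_rw [integral_const_mul, integral_exp_mul_exp_neg, mul_ite, mul_zero, sum_ite_eq,
    if_pos ha]
  exact mul_comm _ _

lemma add_mul_exp_pow (p q θ : ℂ) (k : ℕ) :
    (p + q * exp θ) ^ k =
      ∑ a ∈ range (k + 1), q ^ a * p ^ (k - a) * k.choose a * exp (a * θ) := by
  rw [add_comm, add_pow]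
  refine sum_congr rfl fun a _ => ?_
  rw [exp_nat_mul]
  ring

lemma ofReal_sq_add_sq_sub_mul_cos_eq (u v t : ℝ) :
    ((u ^ 2 + v ^ 2 - 2 * u * v * Real.cos t : ℝ) : ℂ) =
      (v + -u * exp (t * I)) * (v + -u * exp (-(t * I))) := by
  have h1 : exp (t * I) * exp (-(t * I)) = 1 := by rw [← exp_add]; simp
  have h2 : 2 * cos t = exp (t * I) + exp (-(t * I)) := by rw [Complex.cos]; ring_nf
  push_cast
  linear_combination -(u ^ 2 : ℂ) * h1 - u * v * h2

lemma sq_add_sq_sub_mul_cos_nonneg (u v t : ℝ) :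
    0 ≤ u ^ 2 + v ^ 2 - 2 * u * v * Real.cos t := by
  nlinarith [sq_nonneg (u - v * Real.cos t), sq_nonneg (v * Real.sin t), Real.sin_sq_add_cos_sq t]

lemma integral_sq_add_sq_sub_mul_cos_pow (u v : ℝ) (k : ℕ) :
    ∫ t in (0 : ℝ)..2 * π, ((u ^ 2 + v ^ 2 - 2 * u * v * Real.cos t : ℝ) : ℂ) ^ k =
      2 * π * chooseSqPoly k (u ^ 2) (v ^ 2) := by
  simp_rw [ofReal_sq_add_sq_sub_mul_cos_eq, mul_pow, add_mul_exp_pow,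
    integral_sum_exp_mul_sum_exp_neg, chooseSqPoly]
  congr 1
  refine sum_congr rfl fun a _ => ?_
  rw [← neg_sq (u : ℂ), pow_right_comm _ 2 a, pow_right_comm _ 2 (k - a)]
  ring

lemma hasSum_integral_besselCoeff_mul_pow {g : ℝ → ℂ} (hg : Continuous g) (a b : ℝ) :
    HasSum (fun k => besselCoeff k * ∫ t in a..b, g t ^ k)
      (∫ t in a..b, ∑' k, besselCoeff k * g t ^ k) := by
  obtain ⟨B, hB⟩ := isCompact_uIcc.exists_bound_of_continuousOn hg.continuousOn
  simp_rw [← integral_const_mul]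
  refine hasSum_integral_of_dominated_convergence (fun k _ => (B / 4) ^ k / k !)
    (fun k => (by fun_prop : Continuous _).aestronglyMeasurable)
    (fun k => .of_forall fun t ht =>
      norm_besselCoeff_mul_pow_le (hB t (Set.uIoc_subset_uIcc ht)) k)
    (.of_forall fun _ _ => Real.summable_pow_div_factorial _) intervalIntegrable_const
    (.of_forall fun t _ => (summable_norm_besselCoeff_mul_pow _).of_norm.hasSum)

theorem stmt17_general (lam : ℂ) (u v : ℝ) :
    J0c (lam * u) * J0c (lam * v)
      = (1 / (2 * Real.pi)) •
          ∫ t in (0:ℝ)..(2 * Real.pi),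
            J0c (lam * Real.sqrt (u ^ 2 + v ^ 2 - 2 * u * v * Real.cos t)) := by
  have hJ (t : ℝ) : J0c (lam * Real.sqrt (u ^ 2 + v ^ 2 - 2 * u * v * Real.cos t)) =
      ∑' k, besselCoeff k * (lam ^ 2 * ((u ^ 2 + v ^ 2 - 2 * u * v * Real.cos t : ℝ) : ℂ)) ^ k := by
    rw [J0c_eq_tsum, mul_pow, ← ofReal_pow, Real.sq_sqrt (sq_add_sq_sub_mul_cos_nonneg u v t)]
  have hRHS := hasSum_integral_besselCoeff_mul_pow
    (g := fun t => lam ^ 2 * ((u ^ 2 + v ^ 2 - 2 * u * v * Real.cos t : ℝ) : ℂ))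
    (by fun_prop) 0 (2 * π)
  simp only [← hJ] at hRHS
  simp only [mul_pow, integral_const_mul, integral_sq_add_sq_sub_mul_cos_pow] at hRHS
  rw [J0c_mul_J0c, ← hRHS.tsum_eq, Complex.real_smul, ← tsum_mul_left]
  refine tsum_congr fun n => ?_
  have hπ : (π : ℂ) ≠ 0 := ofReal_ne_zero.mpr Real.pi_ne_zero
  rw [mul_pow, mul_pow, chooseSqPoly_mul_mul]
  push_cast
  field_simp

theorem stmt17 (lam : ℂ) (u v : ℝ) (hu : 0 ≤ u) (hv : 0 ≤ v) :
    J0c (lam * u) * J0c (lam * v)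
      = (1 / (2 * Real.pi)) •
          ∫ t in (0:ℝ)..(2 * Real.pi),
            J0c (lam * Real.sqrt (u ^ 2 + v ^ 2 - 2 * u * v * Real.cos t)) :=
  stmt17_general lam u v
end
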